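/- arXiv:2506.00797 — 2 statements merged into one kernel-verified Lean document; each statement's English description precedes it below -/
import Mathlib

section
/- Let Q : S × A → ℝ, let G_c = (N, E_c) be a CG of Q, and let π be a stochastic action-dependent joint policy associated with an ADG G_d such that N_d(k) = N_c(k^{[+]}) for every k ∈ N. Suppose π is G_d-locally optimal with respect to Q. Then for every i ∈ N, every s ∈ S and every a'_{i^-} ∈ ∏_{j<i} A_j, E_{π_{i^{[+]}}}[Q(s, a'_{i^-}, a_{i^{[+]}})] = max_{a_{i^{[+]}} ∈ ∏_{j≥i}A_j} Q(s, a'_{i^-}, a_{i^{[+]}}), where on the left the coordinates in i^- are clamped to a'_{i^-} and the coordinates in i^{[+]} are drawn from the clamped joint policy. In particular, taking i = 1, E_{π}[Q(s, a)] = max_{a ∈ A} Q(s, a) for every s ∈ S. -/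
/-- `N_c(S)`: the set of neighbors of a set `S` of vertices in an undirected graph,
excluding `S` itself. -/
def ncSet {n : ℕ} (Gc : SimpleGraph (Fin n)) (S : Set (Fin n)) : Set (Fin n) :=
  (⋃ j ∈ S, Gc.neighborSet j) \ S

/-- `G_c` is a coordination graph (CG) of `Q : S × A → ℝ`: there is a family of local
value functions `q i j`, one for each edge `(i,j) ∈ E_c` (with `i < j`, so each
undirected edge is counted once; the family vanishes off the edges), such that
`Q(s,a) = Σ_{(i,j)∈E_c} q i j (s, a_i, a_j)`. -/
def IsCG {n : ℕ} {St : Type*} {A : Fin n → Type*} (Gc : SimpleGraph (Fin n))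
    (Q : St → (∀ i, A i) → ℝ) : Prop :=
  ∃ q : (i : Fin n) → (j : Fin n) → St → A i → A j → ℝ,
    (∀ i j, ¬(i < j ∧ Gc.Adj i j) → ∀ s ai aj, q i j s ai aj = 0) ∧
    ∀ s a, Q s a = ∑ i, ∑ j, q i j s (a i) (a j)

/-- Combine clamped values `a'` (on the coordinates in `F`) with free values `b`
(on the coordinates outside `F`) into a full joint action. -/
def comb {n : ℕ} {A : Fin n → Type*} (F : Finset (Fin n)) (a' : ∀ i, A i)
    (b : (j : {j : Fin n // j ∉ F}) → A j.1) : ∀ i, A i :=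
  fun m => if h : m ∉ F then b ⟨m, h⟩ else a' m

/-- The clamped expectation `E_{π_{-F}}[f(s, a'_F, a_{-F})]`: the coordinates in `F`
are clamped to the values of `a'`, and the agents outside `F` draw their actions from
their (action-dependent) policies, each `π j` conditioning on the actions of its
in-neighbors `N_d(j) = {k | Ed k j}` in the combined action vector. -/
def clampedExp {n : ℕ} {St : Type*} {A : Fin n → Type*} [∀ i, Fintype (A i)]
    (Ed : Fin n → Fin n → Prop) [DecidableRel Ed]
    (π : (i : Fin n) → St → ((j : {j : Fin n // Ed j i}) → A j.1) → A i → ℝ)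
    (F : Finset (Fin n)) (s : St) (a' : ∀ i, A i)
    (f : (∀ i, A i) → ℝ) : ℝ :=
  ∑ b : (j : {j : Fin n // j ∉ F}) → A j.1,
    (∏ j : {j : Fin n // j ∉ F},
        π j.1 s (fun k => comb F a' b k.1) (b j)) * f (comb F a' b)

/-- `π` is a (stochastic action-dependent) joint policy: each conditional `π i s c`
is a probability distribution on `A i`. -/
def IsPolicy {n : ℕ} {St : Type*} {A : Fin n → Type*} [∀ i, Fintype (A i)]
    (Ed : Fin n → Fin n → Prop)
    (π : (i : Fin n) → St → ((j : {j : Fin n // Ed j i}) → A j.1) → A i → ℝ) : Prop :=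
  ∀ (i : Fin n) (s : St) (c : (j : {j : Fin n // Ed j i}) → A j.1),
    (∀ ai, 0 ≤ π i s c ai) ∧ ∑ ai, π i s c ai = 1

/-- `π` is `G_d`-locally optimal with respect to `Q`: for every agent `i`, state `s`,
and clamped values `a'` on `N_d(i)`,
`E_{π_{-N_d(i)}}[Q(s, a'_{N_d(i)}, a_{-N_d(i)})]
  = max_{a_i} E_{π_{-N_d[i]}}[Q(s, a'_{N_d(i)}, a_i, a_{-N_d[i]})]`. -/
def GdLocallyOpt {n : ℕ} {St : Type*} {A : Fin n → Type*}
    [∀ i, Fintype (A i)] [∀ i, Nonempty (A i)]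
    (Ed : Fin n → Fin n → Prop) [DecidableRel Ed]
    (π : (i : Fin n) → St → ((j : {j : Fin n // Ed j i}) → A j.1) → A i → ℝ)
    (Q : St → (∀ i, A i) → ℝ) : Prop :=
  ∀ (i : Fin n) (s : St) (a' : ∀ j, A j),
    clampedExp Ed π (Finset.univ.filter fun j => Ed j i) s a' (Q s)
      = ⨆ ai : A i, clampedExp Ed π (Finset.univ.filter fun j => Ed j i ∨ j = i) s
          (Function.update a' i ai) (Q s)

section aux
variable {n : ℕ} {St : Type*} {A : Fin n → Type*} [∀ i, Fintype (A i)]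
  {Ed : Fin n → Fin n → Prop} [DecidableRel Ed]
  {π : (i : Fin n) → St → ((j : {j : Fin n // Ed j i}) → A j.1) → A i → ℝ}

open Finset
open scoped Classical

lemma comb_mem {F : Finset (Fin n)} {a' : ∀ i, A i} {b} {m : Fin n} (h : m ∈ F) :
    comb F a' b m = a' m := dif_neg (not_not_intro h)

lemma comb_notMem {F : Finset (Fin n)} {a' : ∀ i, A i} {b} {m : Fin n} (h : m ∉ F) :
    comb F a' b m = b ⟨m, h⟩ := dif_pos h

lemma clampedExp_add (F : Finset (Fin n)) (s : St) (a' : ∀ i, A i)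
    (f g : (∀ i, A i) → ℝ) :
    clampedExp Ed π F s a' (fun c => f c + g c)
      = clampedExp Ed π F s a' f + clampedExp Ed π F s a' g := by
  unfold clampedExp
  rw [← Finset.sum_add_distrib]
  exact Finset.sum_congr rfl fun b _ => by ring

lemma clampedExp_univ (s : St) (a' : ∀ i, A i) (f : (∀ i, A i) → ℝ) :
    clampedExp Ed π Finset.univ s a' f = f a' := by
  have hcomb : ∀ b, comb (univ : Finset (Fin n)) a' b = a' := by
    intro b; funext m; exact comb_mem (mem_univ m)
  haveI : IsEmpty {j : Fin n // j ∉ (univ : Finset (Fin n))} :=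
    ⟨fun j => j.2 (mem_univ j.1)⟩
  haveI : Unique ((j : {j : Fin n // j ∉ (univ : Finset (Fin n))}) → A j.1) :=
    ⟨⟨fun j => absurd (mem_univ j.1) j.2⟩, fun b => funext fun j => absurd (mem_univ j.1) j.2⟩
  unfold clampedExp
  rw [Fintype.sum_unique]
  simp [hcomb]

set_option linter.unusedSectionVars false

set_option maxHeartbeats 1000000 in
lemma clampedExp_eq_full (F : Finset (Fin n)) (s : St) (a' : ∀ i, A i)
    (f : (∀ i, A i) → ℝ) :
    clampedExp Ed π F s a' f
      = ∑ c : ∀ i, A i, if ∀ j ∈ F, c j = a' j then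
          (∏ j ∈ Fᶜ, π j s (fun k => c k.1) (c j)) * f c else 0 := by
  classical
  rw [show (∑ c : ∀ i, A i, if ∀ j ∈ F, c j = a' j then
          (∏ j ∈ Fᶜ, π j s (fun k => c k.1) (c j)) * f c else 0)
      = ∑ c ∈ univ.filter (fun c : ∀ i, A i => ∀ j ∈ F, c j = a' j),
          (∏ j ∈ Fᶜ, π j s (fun k => c k.1) (c j)) * f c from (Finset.sum_filter _ _).symm]
  unfold clampedExp
  refine Finset.sum_nbij' (fun b => comb F a' b) (fun c => fun j => c j.1) ?_ ?_ ?_ ?_ ?_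
  · intro b _
    simp only [mem_filter, mem_univ, true_and]
    intro j hj; exact comb_mem hj
  · intro c _; exact mem_univ _
  · intro b _
    funext j
    exact comb_notMem j.2
  · intro c hc
    simp only [mem_filter, mem_univ, true_and] at hc
    funext m
    by_cases h : m ∈ F
    · rw [comb_mem h]; exact (hc m h).symm
    · rw [comb_notMem h]
  · intro b _
    have hc : ∀ (j : {j : Fin n // j ∉ F}), comb F a' b j.1 = b j := fun j => comb_notMem j.2
    rw [Finset.prod_subtype Fᶜ (fun x => Finset.mem_compl) 
      (fun j => π j s (fun k => comb F a' b k.1) (comb F a' b j))]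
    congr 1
    exact Finset.prod_congr rfl fun j _ => by rw [hc j]

lemma sum_update_eq {t : Fin n} (a' : ∀ i, A i) (φ : (∀ i, A i) → A t → ℝ)
    (hinv : ∀ c x y, φ (Function.update c t y) x = φ c x) :
    ∑ c : ∀ i, A i, φ c (c t)
      = ∑ c : ∀ i, A i, (if c t = a' t then ∑ x, φ c x else 0) := by
  classical
  have h1 : ∀ c : ∀ i, A i, φ c (c t) = ∑ x, if x = c t then φ c x else 0 := by
    intro c
    rw [Finset.sum_ite_eq' univ (c t) (fun x => φ c x)]
    simp
  calc ∑ c : ∀ i, A i, φ c (c t)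
      = ∑ c : ∀ i, A i, ∑ x, if x = c t then φ c x else 0 := Finset.sum_congr rfl fun c _ => h1 c
    _ = ∑ x, ∑ c : ∀ i, A i, if x = c t then φ c x else 0 := Finset.sum_comm
    _ = ∑ x, ∑ c ∈ univ.filter (fun c : ∀ i, A i => x = c t), φ c x := by
        refine Finset.sum_congr rfl fun x _ => ?_
        rw [Finset.sum_filter]
    _ = ∑ x, ∑ c ∈ univ.filter (fun c : ∀ i, A i => c t = a' t), φ c x := by
        refine Finset.sum_congr rfl fun x _ => ?_
        refine Finset.sum_nbij' (fun c => Function.update c t (a' t))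
          (fun c => Function.update c t x) ?_ ?_ ?_ ?_ ?_
        · intro c _; simp
        · intro c _; simp
        · intro c hc
          simp only [mem_filter, mem_univ, true_and] at hc
          rw [Function.update_idem, hc, Function.update_eq_self]
        · intro c hc
          simp only [mem_filter, mem_univ, true_and] at hc
          rw [Function.update_idem, ← hc, Function.update_eq_self]
        · intro c _; exact (hinv c x (a' t)).symm
    _ = ∑ c ∈ univ.filter (fun c : ∀ i, A i => c t = a' t), ∑ x, φ c x := Finset.sum_comm
    _ = ∑ c : ∀ i, A i, (if c t = a' t then ∑ x, φ c x else 0) := Finset.sum_filter _ _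

set_option maxHeartbeats 1000000 in
lemma clampedExp_step (hπ : IsPolicy Ed π) (F : Finset (Fin n)) (t : Fin n)
    (ht : t ∉ F) (htt : ¬ Ed t t) (s : St) (a' : ∀ i, A i) (f : (∀ i, A i) → ℝ)
    (hf : ∀ c x, f (Function.update c t x) = f c)
    (hcond : ∀ j, j ∉ F → j ≠ t → ¬ Ed t j) :
    clampedExp Ed π F s a' f = clampedExp Ed π (insert t F) s a' f := by
  classical
  rw [clampedExp_eq_full, clampedExp_eq_full]
  set φ : (∀ i, A i) → A t → ℝ := fun c x =>
    if ∀ j ∈ F, c j = a' j then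
      π t s (fun k : {k : Fin n // Ed k t} => c k.1) x
        * ((∏ j ∈ Fᶜ.erase t, π j s (fun k : {k : Fin n // Ed k j} => c k.1) (c j)) * f c)
    else 0 with hφ
  have hinv : ∀ c x y, φ (Function.update c t y) x = φ c x := by
    intro c x y
    have hcnd : (∀ j ∈ F, Function.update c t y j = a' j) ↔ (∀ j ∈ F, c j = a' j) := by
      constructor <;> intro h j hj <;>
        have hjt : j ≠ t := fun he => ht (he ▸ hj)
      · have := h j hj; rwa [Function.update_of_ne hjt] at this
      · rw [Function.update_of_ne hjt]; exact h j hj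
    rw [hφ]
    dsimp only
    rw [if_congr hcnd rfl rfl]
    by_cases hc : ∀ j ∈ F, c j = a' j
    · rw [if_pos hc, if_pos hc]
      have e1 : (fun k : {k : Fin n // Ed k t} => Function.update c t y k.1)
          = fun k : {k : Fin n // Ed k t} => c k.1 := by
        funext k
        have hk : k.1 ≠ t := by
          intro he
          have hkk := k.2
          rw [he] at hkk
          exact htt hkk
        exact Function.update_of_ne hk _ _
      have e2 : ∀ j ∈ Fᶜ.erase t,
          π j s (fun k : {k : Fin n // Ed k j} => Function.update c t y k.1)
            (Function.update c t y j)
          = π j s (fun k : {k : Fin n // Ed k j} => c k.1) (c j) := by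
        intro j hj
        obtain ⟨hjt, hjF⟩ := Finset.mem_erase.mp hj
        rw [Function.update_of_ne hjt]
        congr 1
        funext k
        have hk : k.1 ≠ t := by
          intro he
          have hkk := k.2
          rw [he] at hkk
          exact hcond j (Finset.mem_compl.mp hjF) hjt hkk
        exact Function.update_of_ne hk _ _
      rw [e1, hf, Finset.prod_congr rfl e2]
    · rw [if_neg hc, if_neg hc]
  have lhs_eq : ∀ c : ∀ i, A i,
      (if ∀ j ∈ F, c j = a' j then (∏ j ∈ Fᶜ, π j s (fun k => c k.1) (c j)) * f c else 0)
        = φ c (c t) := by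
    intro c
    rw [hφ]
    dsimp only
    by_cases hc : ∀ j ∈ F, c j = a' j
    · rw [if_pos hc, if_pos hc,
        ← Finset.mul_prod_erase Fᶜ (fun j => π j s (fun k => c k.1) (c j))
          (Finset.mem_compl.mpr ht), mul_assoc]
    · rw [if_neg hc, if_neg hc]
  rw [Finset.sum_congr rfl fun c _ => lhs_eq c, sum_update_eq a' φ hinv]
  refine Finset.sum_congr rfl fun c _ => ?_
  rw [hφ]
  dsimp only
  by_cases h1 : c t = a' t
  · rw [if_pos h1]
    by_cases h2 : ∀ j ∈ F, c j = a' j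
    · have h3 : ∀ j ∈ insert t F, c j = a' j := by
        intro j hj
        rcases Finset.mem_insert.mp hj with rfl | hj
        · exact h1
        · exact h2 j hj
      rw [if_pos h3]
      have : (∑ x, φ c x) = ∑ x : A t, π t s (fun k : {k : Fin n // Ed k t} => c k.1) x
          * ((∏ j ∈ Fᶜ.erase t, π j s (fun k : {k : Fin n // Ed k j} => c k.1) (c j)) * f c) := by
        refine Finset.sum_congr rfl fun x _ => ?_
        rw [hφ]; dsimp only; rw [if_pos h2]
      rw [show (∑ x, φ c x) = _ from this, ← Finset.sum_mul, (hπ t s _).2, one_mul,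
        Finset.compl_insert]
    · have h3 : ¬ ∀ j ∈ insert t F, c j = a' j := fun h =>
        h2 fun j hj => h j (Finset.mem_insert_of_mem hj)
      rw [if_neg h3]
      rw [show (∑ x, φ c x) = 0 from Finset.sum_eq_zero fun x _ => by
        rw [hφ]; dsimp only; rw [if_neg h2]]
  · rw [if_neg h1, if_neg (fun h : ∀ j ∈ insert t F, c j = a' j =>
      h1 (h t (Finset.mem_insert_self t F)))]

lemma clampedExp_steps_aux (hπ : IsPolicy Ed π) (hEd : ∀ i j : Fin n, Ed j i → j < i)
    (F' : Finset (Fin n)) (s : St) (a' : ∀ i, A i) (f : (∀ i, A i) → ℝ)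
    (k : ℕ) : ∀ F : Finset (Fin n), F ⊆ F' → (F' \ F).card ≤ k →
    (∀ t ∈ F' \ F, ∀ c x, f (Function.update c t x) = f c) →
    (∀ j, j ∉ F' → ∀ t ∈ F' \ F, ¬ Ed t j) →
    clampedExp Ed π F s a' f = clampedExp Ed π F' s a' f := by
  classical
  induction k with
  | zero =>
    intro F hFF hcard _ _
    have : F' \ F = ∅ := Finset.card_eq_zero.mp (Nat.le_zero.mp hcard)
    have hF : F = F' :=
      Finset.Subset.antisymm hFF (Finset.sdiff_eq_empty_iff_subset.mp this)
    rw [hF]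
  | succ k ih =>
    intro F hFF hcard hf hcond
    by_cases hne : (F' \ F) = ∅
    · have hF : F = F' :=
        Finset.Subset.antisymm hFF (Finset.sdiff_eq_empty_iff_subset.mp hne)
      rw [hF]
    · have hne' : (F' \ F).Nonempty := Finset.nonempty_of_ne_empty hne
      set t := (F' \ F).max' hne' with hts
      have htmem : t ∈ F' \ F := (F' \ F).max'_mem hne'
      have htF : t ∉ F := (Finset.mem_sdiff.mp htmem).2
      have htF' : t ∈ F' := (Finset.mem_sdiff.mp htmem).1
      have step1 : clampedExp Ed π F s a' f = clampedExp Ed π (insert t F) s a' f := by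
        refine clampedExp_step hπ F t htF (fun h => lt_irrefl t (hEd t t h)) s a' f
          (hf t htmem) ?_
        intro j hjF hjt hEdtj
        by_cases hjF' : j ∈ F'
        · have hj : j ∈ F' \ F := Finset.mem_sdiff.mpr ⟨hjF', hjF⟩
          have : j ≤ t := Finset.le_max' _ j hj
          exact absurd (hEd j t hEdtj) (not_lt.mpr this)
        · exact hcond j hjF' t htmem hEdtj
      rw [step1]
      refine ih (insert t F) (Finset.insert_subset htF' hFF) ?_ ?_ ?_
      · rw [Finset.sdiff_insert]
        calc ((F' \ F).erase t).card = (F' \ F).card - 1 :=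
              Finset.card_erase_of_mem htmem
          _ ≤ k := by omega
      · intro u hu
        rw [Finset.sdiff_insert] at hu
        exact hf u (Finset.erase_subset _ _ hu)
      · intro j hj u hu
        rw [Finset.sdiff_insert] at hu
        exact hcond j hj u (Finset.erase_subset _ _ hu)

lemma clampedExp_steps (hπ : IsPolicy Ed π) (hEd : ∀ i j : Fin n, Ed j i → j < i)
    {F F' : Finset (Fin n)} (hFF : F ⊆ F') (s : St) (a' : ∀ i, A i)
    (f : (∀ i, A i) → ℝ)
    (hf : ∀ t ∈ F' \ F, ∀ c x, f (Function.update c t x) = f c)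
    (hcond : ∀ j, j ∉ F' → ∀ t ∈ F' \ F, ¬ Ed t j) :
    clampedExp Ed π F s a' f = clampedExp Ed π F' s a' f :=
  clampedExp_steps_aux hπ hEd F' s a' f (F' \ F).card F hFF le_rfl hf hcond

lemma clampedExp_update_clamped (F : Finset (Fin n)) (t : Fin n) (htF : t ∈ F)
    (s : St) (a' : ∀ i, A i) (x : A t) (f : (∀ i, A i) → ℝ)
    (hf : ∀ c y, f (Function.update c t y) = f c)
    (hcond : ∀ j, j ∉ F → ¬ Ed t j) :
    clampedExp Ed π F s (Function.update a' t x) f = clampedExp Ed π F s a' f := by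
  unfold clampedExp
  refine Finset.sum_congr rfl fun b _ => ?_
  have hcomb : comb F (Function.update a' t x) b = Function.update (comb F a' b) t x := by
    funext m
    by_cases hm : m ∈ F
    · rw [comb_mem hm]
      by_cases hmt : m = t
      · subst hmt
        rw [Function.update_self, Function.update_self]
      · rw [Function.update_of_ne hmt, Function.update_of_ne hmt, comb_mem hm]
    · have hmt : m ≠ t := fun he => hm (he ▸ htF)
      rw [comb_notMem hm, Function.update_of_ne hmt, comb_notMem hm]
  rw [hcomb]
  congr 1
  · refine Finset.prod_congr rfl fun j _ => ?_
    have hjt : j.1 ≠ t := fun he => j.2 (he ▸ htF)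
    congr 1
    funext kk
    have hk : kk.1 ≠ t := by
      intro he
      have hkk := kk.2
      rw [he] at hkk
      exact hcond j.1 j.2 hkk
    exact Function.update_of_ne hk _ _
  · exact hf _ _

end aux

section parts
variable {n : ℕ} {St : Type*} {A : Fin n → Type*}
  (q : (i : Fin n) → (j : Fin n) → St → A i → A j → ℝ)

def Qlow (s : St) (k : ℕ) (c : ∀ i, A i) : ℝ :=
  ∑ j, ∑ l, if j.val < k ∧ l.val < k then q j l s (c j) (c l) else 0

def Qhigh (s : St) (k : ℕ) (c : ∀ i, A i) : ℝ :=
  ∑ j, ∑ l, if ¬(j.val < k ∧ l.val < k) then q j l s (c j) (c l) else 0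

lemma Qsplit (Q : St → (∀ i, A i) → ℝ)
    (hq : ∀ s a, Q s a = ∑ i, ∑ j, q i j s (a i) (a j)) (s : St) (k : ℕ) :
    Q s = fun c => Qlow q s k c + Qhigh q s k c := by
  funext c
  rw [hq s c]
  unfold Qlow Qhigh
  rw [← Finset.sum_add_distrib]
  refine Finset.sum_congr rfl fun j _ => ?_
  rw [← Finset.sum_add_distrib]
  refine Finset.sum_congr rfl fun l _ => ?_
  by_cases h : j.val < k ∧ l.val < k
  · rw [if_pos h, if_neg (not_not_intro h), add_zero]
  · rw [if_neg h, if_pos h, zero_add]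

lemma Qlow_update (s : St) (k : ℕ) (t : Fin n) (ht : ¬ t.val < k) (c : ∀ i, A i)
    (x : A t) : Qlow q s k (Function.update c t x) = Qlow q s k c := by
  unfold Qlow
  refine Finset.sum_congr rfl fun j _ => Finset.sum_congr rfl fun l _ => ?_
  by_cases h : j.val < k ∧ l.val < k
  · have hjt : j ≠ t := fun he => ht (he ▸ h.1)
    have hlt : l ≠ t := fun he => ht (he ▸ h.2)
    rw [if_pos h, if_pos h, Function.update_of_ne hjt, Function.update_of_ne hlt]
  · rw [if_neg h, if_neg h]

lemma Qhigh_update {Gc : SimpleGraph (Fin n)}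
    (hq0 : ∀ i j, ¬(i < j ∧ Gc.Adj i j) → ∀ s ai aj, q i j s ai aj = 0)
    (s : St) (k : ℕ) (t : Fin n) (ht : t.val < k)
    (hna : ∀ l : Fin n, Gc.Adj t l → k ≤ l.val → False) (c : ∀ i, A i) (x : A t) :
    Qhigh q s k (Function.update c t x) = Qhigh q s k c := by
  unfold Qhigh
  refine Finset.sum_congr rfl fun j _ => Finset.sum_congr rfl fun l _ => ?_
  by_cases hP : ¬(j.val < k ∧ l.val < k)
  · rw [if_pos hP, if_pos hP]
    by_cases hjl : j < l ∧ Gc.Adj j l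
    · have hjlv : j.val < l.val := hjl.1
      have hkl : k ≤ l.val := by
        by_contra hlk
        exact hP ⟨by omega, by omega⟩
      have hlt : l ≠ t := fun he => by
        rw [he] at hkl; omega
      have hjt : j ≠ t := by
        intro he
        subst he
        exact hna l hjl.2 hkl
      rw [Function.update_of_ne hjt, Function.update_of_ne hlt]
    · rw [hq0 j l hjl, hq0 j l hjl]
  · rw [if_neg hP, if_neg hP]

end parts
lemma add_ciSup_explicit {ι : Type*} [Nonempty ι] [Fintype ι] {a : ℝ} {f : ι → ℝ} :
    (⨆ x, (a + f x)) = a + ⨆ x, f x :=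
  (add_ciSup (Set.Finite.bddAbove (Set.finite_range f)) a).symm


set_option maxHeartbeats 2000000 in
lemma main_aux {n : ℕ} {St : Type*} {A : Fin n → Type*}
    [∀ i, Fintype (A i)] [∀ i, Nonempty (A i)]
    (Gc : SimpleGraph (Fin n)) (Q : St → (∀ i, A i) → ℝ)
    (q : (i : Fin n) → (j : Fin n) → St → A i → A j → ℝ)
    (hq0 : ∀ i j, ¬(i < j ∧ Gc.Adj i j) → ∀ s ai aj, q i j s ai aj = 0)
    (hq : ∀ s a, Q s a = ∑ i, ∑ j, q i j s (a i) (a j))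
    (Ed : Fin n → Fin n → Prop) [inst : DecidableRel Ed]
    (hEd : ∀ i j : Fin n, Ed j i → j < i)
    (hNd : ∀ k : Fin n, {j : Fin n | Ed j k} = ncSet Gc {j : Fin n | k ≤ j})
    (π : (i : Fin n) → St → ((j : {j : Fin n // Ed j i}) → A j.1) → A i → ℝ)
    (hπ : IsPolicy Ed π) (hopt : GdLocallyOpt Ed π Q)
    (d : ℕ) : ∀ k : ℕ, n ≤ k + d → ∀ (s : St) (a' : ∀ j, A j),
      clampedExp Ed π (Finset.univ.filter fun j => j.val < k) s a' (Q s)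
        = ⨆ b : ∀ j, A j, Q s (fun j => if j.val < k then a' j else b j) := by
  have hbase : ∀ k : ℕ, n ≤ k → ∀ (s : St) (a' : ∀ j, A j),
      clampedExp Ed π (Finset.univ.filter fun j => j.val < k) s a' (Q s)
        = ⨆ b : ∀ j, A j, Q s (fun j => if j.val < k then a' j else b j) := by
    intro k hk s a'
    have hall : ∀ j : Fin n, j.val < k := fun j => lt_of_lt_of_le j.isLt hk
    have hfil : (Finset.univ.filter fun j : Fin n => j.val < k) = Finset.univ := by
      ext j; simpa using hall j
    have hfun : ∀ b : ∀ j, A j,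
        (fun j => if j.val < k then a' j else b j) = a' := by
      intro b; funext j; rw [if_pos (hall j)]
    rw [hfil, clampedExp_univ]
    simp only [hfun]
    exact ciSup_const.symm
  induction d with
  | zero => intro k hk; exact hbase k (by omega)
  | succ d ih =>
    intro k hk s a'
    by_cases hkn : n ≤ k
    · exact hbase k hkn s a'
    · push_neg at hkn
      set i : Fin n := ⟨k, hkn⟩ with hidef
      have hival : i.val = k := rfl
      -- graph key facts
      have hEdkey : ∀ t l : Fin n, t.val < k → Gc.Adj t l → k ≤ l.val → Ed t i := by
        intro t l htk hadj hkl
        have : t ∈ {j : Fin n | Ed j i} := by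
          rw [hNd i]
          refine ⟨?_, ?_⟩
          · exact Set.mem_biUnion (show l ∈ {j : Fin n | i ≤ j} from by
              simpa [Fin.le_def, hival] using hkl) hadj.symm
          · intro hti
            have : i ≤ t := hti
            rw [Fin.le_def, hival] at this
            omega
        exact this
      have hbkey : ∀ j m : Fin n, k ≤ j.val → Ed m j → m.val < k → Ed m i := by
        intro j m hkj hEdmj hmk
        have h1 : m ∈ ncSet Gc {l : Fin n | j ≤ l} := by
          rw [← hNd j]; exact hEdmj
        obtain ⟨hU, _⟩ := h1
        rw [Set.mem_iUnion₂] at hU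
        obtain ⟨l, hl, hml⟩ := hU
        have hjl : j.val ≤ l.val := Fin.le_def.mp hl
        exact hEdkey m l hmk hml.symm (by omega)
      -- abbreviations
      have hQs : Q s = fun c => Qlow q s k c + Qhigh q s k c := Qsplit q Q hq s k
      have hQlowup : ∀ t : Fin n, ¬ t.val < k →
          ∀ (c : ∀ j, A j) (x : A t), Qlow q s k (Function.update c t x) = Qlow q s k c :=
        fun t ht c x => Qlow_update q s k t ht c x
      have hQhighup : ∀ t : Fin n, t.val < k → ¬ Ed t i →
          ∀ (c : ∀ j, A j) (x : A t), Qhigh q s k (Function.update c t x) = Qhigh q s k c := by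
        intro t ht hEdti c x
        refine Qhigh_update q hq0 s k t ht ?_ c x
        intro l hadj hkl
        exact hEdti (hEdkey t l ht hadj hkl)
      -- clampedExp computations
      -- (1) Qlow under Fp-clamp
      have hlow_p : clampedExp Ed π (Finset.univ.filter fun j : Fin n => j.val < k) s a'
          (Qlow q s k) = Qlow q s k a' := by
        rw [clampedExp_steps hπ hEd (Finset.subset_univ _) s a' _ ?_ ?_, clampedExp_univ]
        · intro t htm c x
          rw [Finset.mem_sdiff, Finset.mem_filter] at htm
          exact hQlowup t (fun h => htm.2 ⟨Finset.mem_univ t, h⟩) c x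
        · intro j hj
          exact absurd (Finset.mem_univ j) hj
      -- (2) Qhigh: D-clamp = Fp-clamp
      have hhigh_p : clampedExp Ed π (Finset.univ.filter fun j : Fin n => Ed j i) s a'
          (Qhigh q s k)
          = clampedExp Ed π (Finset.univ.filter fun j : Fin n => j.val < k) s a'
            (Qhigh q s k) := by
        refine clampedExp_steps hπ hEd ?_ s a' _ ?_ ?_
        · intro j hj
          rw [Finset.mem_filter] at hj ⊢
          have := hEd i j hj.2
          rw [Fin.lt_def, hival] at this
          exact ⟨hj.1, this⟩
        · intro t htm c x
          rw [Finset.mem_sdiff, Finset.mem_filter, Finset.mem_filter] at htm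
          exact hQhighup t htm.1.2 (fun h => htm.2 ⟨Finset.mem_univ t, h⟩) c x
        · intro j hj t htm hEdtj
          rw [Finset.mem_filter] at hj
          rw [Finset.mem_sdiff, Finset.mem_filter, Finset.mem_filter] at htm
          have hkj : k ≤ j.val := by
            by_contra h
            exact hj ⟨Finset.mem_univ j, by omega⟩
          exact htm.2 ⟨Finset.mem_univ t, hbkey j t hkj hEdtj htm.1.2⟩
      -- (3) Qlow: D-clamp = E-clamp
      have hlowD : clampedExp Ed π (Finset.univ.filter fun j : Fin n => Ed j i) s a'
          (Qlow q s k)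
          = clampedExp Ed π ((Finset.univ.filter fun j : Fin n => Ed j i)
              ∪ (Finset.univ.filter fun j : Fin n => i ≤ j)) s a' (Qlow q s k) := by
        refine clampedExp_steps hπ hEd Finset.subset_union_left s a' _ ?_ ?_
        · intro t htm c x
          rw [Finset.mem_sdiff, Finset.mem_union, Finset.mem_filter, Finset.mem_filter] at htm
          have hit : i ≤ t := by
            rcases htm.1 with h | h
            · exact absurd h htm.2
            · exact h.2
          rw [Fin.le_def, hival] at hit
          exact hQlowup t (by omega) c x
        · intro j hj t htm hEdtj
          rw [Finset.mem_union, Finset.mem_filter, Finset.mem_filter] at hj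
          push_neg at hj
          have hji : j.val < k := by
            have := hj.2 (Finset.mem_univ j)
            rw [Fin.lt_def, hival] at this
            omega
          rw [Finset.mem_sdiff, Finset.mem_union, Finset.mem_filter, Finset.mem_filter] at htm
          have hit : i ≤ t := by
            rcases htm.1 with h | h
            · exact absurd h htm.2
            · exact h.2
          rw [Fin.le_def, hival] at hit
          have := hEd j t hEdtj
          rw [Fin.lt_def] at this
          omega
      -- (4) Qlow: D'-clamp with update = E-clamp
      have hiE : i ∈ (Finset.univ.filter fun j : Fin n => Ed j i)
          ∪ (Finset.univ.filter fun j : Fin n => i ≤ j) :=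
        Finset.mem_union_right _ (Finset.mem_filter.mpr ⟨Finset.mem_univ i, le_refl i⟩)
      have hlowD' : ∀ ai : A i,
          clampedExp Ed π (Finset.univ.filter fun j : Fin n => Ed j i ∨ j = i) s
            (Function.update a' i ai) (Qlow q s k)
          = clampedExp Ed π ((Finset.univ.filter fun j : Fin n => Ed j i)
              ∪ (Finset.univ.filter fun j : Fin n => i ≤ j)) s a' (Qlow q s k) := by
        intro ai
        have step1 : clampedExp Ed π (Finset.univ.filter fun j : Fin n => Ed j i ∨ j = i) s
            (Function.update a' i ai) (Qlow q s k)
            = clampedExp Ed π ((Finset.univ.filter fun j : Fin n => Ed j i)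
              ∪ (Finset.univ.filter fun j : Fin n => i ≤ j)) s
              (Function.update a' i ai) (Qlow q s k) := by
          refine clampedExp_steps hπ hEd ?_ s _ _ ?_ ?_
          · intro j hj
            rw [Finset.mem_filter] at hj
            rw [Finset.mem_union, Finset.mem_filter, Finset.mem_filter]
            rcases hj.2 with h | h
            · exact Or.inl ⟨hj.1, h⟩
            · exact Or.inr ⟨hj.1, le_of_eq h.symm⟩
          · intro t htm c x
            rw [Finset.mem_sdiff, Finset.mem_union, Finset.mem_filter, Finset.mem_filter,
              Finset.mem_filter] at htm
            have hnt : ¬ (Ed t i ∨ t = i) := fun h => htm.2 ⟨Finset.mem_univ t, h⟩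
            push_neg at hnt
            have hit : i ≤ t := by
              rcases htm.1 with h | h
              · exact absurd h.2 hnt.1
              · exact h.2
            rw [Fin.le_def, hival] at hit
            have : t.val ≠ k := fun h => hnt.2 (Fin.ext (h.trans hival.symm))
            exact hQlowup t (by omega) c x
          · intro j hj t htm hEdtj
            rw [Finset.mem_union, Finset.mem_filter, Finset.mem_filter] at hj
            push_neg at hj
            have hji : j.val < k := by
              have := hj.2 (Finset.mem_univ j)
              rw [Fin.lt_def, hival] at this
              omega
            rw [Finset.mem_sdiff, Finset.mem_union, Finset.mem_filter,
              Finset.mem_filter, Finset.mem_filter] at htm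
            have hnt : ¬ (Ed t i ∨ t = i) := fun h => htm.2 ⟨Finset.mem_univ t, h⟩
            push_neg at hnt
            have hit : i ≤ t := by
              rcases htm.1 with h | h
              · exact absurd h.2 hnt.1
              · exact h.2
            rw [Fin.le_def, hival] at hit
            have := hEd j t hEdtj
            rw [Fin.lt_def] at this
            omega
        rw [step1]
        refine clampedExp_update_clamped _ i hiE s a' ai _ ?_ ?_
        · intro c y
          exact hQlowup i (by omega) c y
        · intro j hj hEdij
          rw [Finset.mem_union, Finset.mem_filter, Finset.mem_filter] at hj
          push_neg at hj
          have hji : j.val < k := by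
            have := hj.2 (Finset.mem_univ j)
            rw [Fin.lt_def, hival] at this
            omega
          have := hEd j i hEdij
          rw [Fin.lt_def, hival] at this
          omega
      -- (5) Qhigh: D'-clamp = Fq-clamp
      have hhighD' : ∀ ai : A i,
          clampedExp Ed π (Finset.univ.filter fun j : Fin n => Ed j i ∨ j = i) s
            (Function.update a' i ai) (Qhigh q s k)
          = clampedExp Ed π (Finset.univ.filter fun j : Fin n => j.val < k + 1) s
            (Function.update a' i ai) (Qhigh q s k) := by
        intro ai
        refine clampedExp_steps hπ hEd ?_ s _ _ ?_ ?_
        · intro j hj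
          rw [Finset.mem_filter] at hj ⊢
          refine ⟨hj.1, ?_⟩
          rcases hj.2 with h | h
          · have := hEd i j h
            rw [Fin.lt_def, hival] at this
            omega
          · rw [h, hival]
            omega
        · intro t htm c x
          rw [Finset.mem_sdiff, Finset.mem_filter, Finset.mem_filter] at htm
          have hnt : ¬ (Ed t i ∨ t = i) := fun h => htm.2 ⟨Finset.mem_univ t, h⟩
          push_neg at hnt
          have htv : t.val ≠ k := fun h => hnt.2 (Fin.ext (h.trans hival.symm))
          have htk : t.val < k := by
            have := htm.1.2
            omega
          exact hQhighup t htk hnt.1 c x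
        · intro j hj t htm hEdtj
          rw [Finset.mem_filter] at hj
          push_neg at hj
          have hkj : k ≤ j.val := by
            have := hj (Finset.mem_univ j)
            omega
          rw [Finset.mem_sdiff, Finset.mem_filter, Finset.mem_filter] at htm
          have hnt : ¬ (Ed t i ∨ t = i) := fun h => htm.2 ⟨Finset.mem_univ t, h⟩
          push_neg at hnt
          have htv : t.val ≠ k := fun h => hnt.2 (Fin.ext (h.trans hival.symm))
          have htk : t.val < k := by
            have := htm.1.2
            omega
          exact hnt.1 (hbkey j t hkj hEdtj htk)
      -- (6) Qlow under Fq-clamp with update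
      have hlowFq : ∀ ai : A i,
          clampedExp Ed π (Finset.univ.filter fun j : Fin n => j.val < k + 1) s
            (Function.update a' i ai) (Qlow q s k) = Qlow q s k a' := by
        intro ai
        rw [clampedExp_steps hπ hEd (Finset.subset_univ _) s _ _ ?_ ?_, clampedExp_univ]
        · exact hQlowup i (by omega) a' ai
        · intro t htm c x
          rw [Finset.mem_sdiff, Finset.mem_filter] at htm
          have : ¬ t.val < k + 1 := fun h => htm.2 ⟨Finset.mem_univ t, h⟩
          exact hQlowup t (by omega) c x
        · intro j hj
          exact absurd (Finset.mem_univ j) hj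
      -- local optimality rearrangement
      have hoptA := hopt i s a'
      have hD : clampedExp Ed π (Finset.univ.filter fun j : Fin n => Ed j i) s a' (Q s)
          = clampedExp Ed π ((Finset.univ.filter fun j : Fin n => Ed j i)
              ∪ (Finset.univ.filter fun j : Fin n => i ≤ j)) s a' (Qlow q s k)
            + clampedExp Ed π (Finset.univ.filter fun j : Fin n => Ed j i) s a'
              (Qhigh q s k) := by
        rw [hQs, clampedExp_add, hlowD]
      have hD' : ∀ ai : A i,
          clampedExp Ed π (Finset.univ.filter fun j : Fin n => Ed j i ∨ j = i) s
            (Function.update a' i ai) (Q s)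
          = clampedExp Ed π ((Finset.univ.filter fun j : Fin n => Ed j i)
              ∪ (Finset.univ.filter fun j : Fin n => i ≤ j)) s a' (Qlow q s k)
            + clampedExp Ed π (Finset.univ.filter fun j : Fin n => j.val < k + 1) s
              (Function.update a' i ai) (Qhigh q s k) := by
        intro ai
        rw [hQs, clampedExp_add, hlowD' ai, hhighD' ai]
      rw [hD] at hoptA
      rw [show (⨆ ai : A i, clampedExp Ed π
          (Finset.univ.filter fun j : Fin n => Ed j i ∨ j = i) s
          (Function.update a' i ai) (Q s))
        = ⨆ ai : A i, (clampedExp Ed π ((Finset.univ.filter fun j : Fin n => Ed j i)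
              ∪ (Finset.univ.filter fun j : Fin n => i ≤ j)) s a' (Qlow q s k)
            + clampedExp Ed π (Finset.univ.filter fun j : Fin n => j.val < k + 1) s
              (Function.update a' i ai) (Qhigh q s k))
        from congrArg _ (funext hD')] at hoptA
      rw [add_ciSup_explicit] at hoptA
      have hW : clampedExp Ed π (Finset.univ.filter fun j : Fin n => Ed j i) s a'
            (Qhigh q s k)
          = ⨆ ai : A i, clampedExp Ed π
              (Finset.univ.filter fun j : Fin n => j.val < k + 1) s
              (Function.update a' i ai) (Qhigh q s k) :=
        add_left_cancel hoptA
      -- assemble LHS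
      have hLHS : clampedExp Ed π (Finset.univ.filter fun j : Fin n => j.val < k) s a' (Q s)
          = ⨆ ai : A i, clampedExp Ed π
              (Finset.univ.filter fun j : Fin n => j.val < k + 1) s
              (Function.update a' i ai) (Q s) := by
        rw [hQs, clampedExp_add, hlow_p, ← hhigh_p, hW, add_ciSup_explicit.symm]
        refine congrArg _ (funext fun ai => ?_)
        rw [clampedExp_add, hlowFq ai]
      rw [hLHS]
      -- apply induction hypothesis
      have hIH : ∀ ai : A i,
          clampedExp Ed π (Finset.univ.filter fun j : Fin n => j.val < k + 1) s
            (Function.update a' i ai) (Q s)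
          = ⨆ b : ∀ j, A j, Q s
              (fun j => if j.val < k + 1 then Function.update a' i ai j else b j) :=
        fun ai => ih (k + 1) (by omega) s (Function.update a' i ai)
      rw [show (⨆ ai : A i, clampedExp Ed π
            (Finset.univ.filter fun j : Fin n => j.val < k + 1) s
            (Function.update a' i ai) (Q s))
          = ⨆ ai : A i, ⨆ b : ∀ j, A j, Q s
              (fun j => if j.val < k + 1 then Function.update a' i ai j else b j)
        from congrArg _ (funext hIH)]
      -- collapse the double supremum
      classical
      have key1 : ∀ (ai : A i) (b : ∀ j, A j),
          (fun j => if j.val < k + 1 then Function.update a' i ai j else b j)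
            = fun j => if j.val < k then a' j else (Function.update b i ai) j := by
        intro ai b
        funext j
        by_cases h1 : j.val < k
        · have hji : j ≠ i := fun he => by rw [he, hival] at h1; omega
          rw [if_pos (by omega), if_pos h1, Function.update_of_ne hji]
        · by_cases h2 : j.val = k
          · have hji : j = i := Fin.ext (h2.trans hival.symm)
            subst hji
            rw [if_pos (by omega), if_neg (by omega), Function.update_self,
              Function.update_self]
          · have hji : j ≠ i := fun he => by rw [he, hival] at h2; exact h2 rfl
            rw [if_neg (by omega), if_neg h1, Function.update_of_ne hji]
      have key2 : ∀ b : ∀ j, A j,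
          (fun j => if j.val < k then a' j else b j)
            = fun j => if j.val < k + 1 then Function.update a' i (b i) j else b j := by
        intro b
        funext j
        by_cases h1 : j.val < k
        · have hji : j ≠ i := fun he => by rw [he, hival] at h1; omega
          rw [if_pos h1, if_pos (by omega), Function.update_of_ne hji]
        · by_cases h2 : j.val = k
          · have hji : j = i := Fin.ext (h2.trans hival.symm)
            subst hji
            rw [if_neg (by omega), if_pos (by omega), Function.update_self]
          · rw [if_neg h1, if_neg (by omega)]
      apply le_antisymm
      · refine ciSup_le fun ai => ciSup_le fun b => ?_
        rw [key1 ai b]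
        exact le_ciSup (f := fun b' : ∀ j, A j => Q s fun j => if j.val < k then a' j else b' j)
          (Set.Finite.bddAbove (Set.finite_range _)) (Function.update b i ai)
      · refine ciSup_le fun b => ?_
        calc Q s (fun j => if j.val < k then a' j else b j)
            = Q s (fun j => if j.val < k + 1 then Function.update a' i (b i) j else b j) := by
              rw [key2 b]
          _ ≤ ⨆ b' : ∀ j, A j, Q s
                (fun j => if j.val < k + 1 then Function.update a' i (b i) j else b' j) :=
              le_ciSup (f := fun b' : ∀ j, A j => Q s fun j =>
                  if j.val < k + 1 then Function.update a' i (b i) j else b' j)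
                (Set.Finite.bddAbove (Set.finite_range _)) b
          _ ≤ ⨆ ai : A i, ⨆ b' : ∀ j, A j, Q s
                (fun j => if j.val < k + 1 then Function.update a' i ai j else b' j) :=
              le_ciSup (f := fun ai : A i => ⨆ b' : ∀ j, A j, Q s
                  (fun j => if j.val < k + 1 then Function.update a' i ai j else b' j))
                (Set.Finite.bddAbove (Set.finite_range _)) (b i)

/-- if `G_c` is a CG of `Q`, `π` is a stochastic action-dependent joint
policy associated with an ADG (edge relation `Ed`, topologically sorted) with
`N_d(k) = N_c(k^{[+]})` for all `k`, and `π` is `G_d`-locally optimal w.r.t. `Q`, then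
for every `i`, `s`, and `a'_{i^-}`,
`E_{π_{i^{[+]}}}[Q(s, a'_{i^-}, a_{i^{[+]}})] = max_{a_{i^{[+]}}} Q(s, a'_{i^-}, a_{i^{[+]}})`;
in particular (`i = 1`), `E_π[Q(s,a)] = max_a Q(s,a)` for every `s`. -/
theorem stmt5 {n : ℕ} {St : Type*} {A : Fin n → Type*}
    [∀ i, Fintype (A i)] [∀ i, Nonempty (A i)]
    (Gc : SimpleGraph (Fin n)) (Q : St → (∀ i, A i) → ℝ) (hCG : IsCG Gc Q)
    (Ed : Fin n → Fin n → Prop) [DecidableRel Ed]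
    (hEd : ∀ i j : Fin n, Ed j i → j < i)
    (hNd : ∀ k : Fin n, {j : Fin n | Ed j k} = ncSet Gc {j : Fin n | k ≤ j})
    (π : (i : Fin n) → St → ((j : {j : Fin n // Ed j i}) → A j.1) → A i → ℝ)
    (hπ : IsPolicy Ed π)
    (hopt : GdLocallyOpt Ed π Q) :
    (∀ (i : Fin n) (s : St) (a' : ∀ j, A j),
      clampedExp Ed π (Finset.univ.filter fun j => j < i) s a' (Q s)
        = ⨆ b : ∀ j, A j, Q s (fun j => if j < i then a' j else b j)) ∧
    (∀ (s : St) (a' : ∀ j, A j),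
      clampedExp Ed π ∅ s a' (Q s) = ⨆ a : ∀ j, A j, Q s a) := by
  obtain ⟨q, hq0, hq⟩ := hCG
  constructor
  · intro i s a'
    have h := main_aux Gc Q q hq0 hq Ed hEd hNd π hπ hopt n i.val (by omega) s a'
    exact h
  · intro s a'
    have h := main_aux Gc Q q hq0 hq Ed hEd hNd π hπ hopt n 0 (by omega) s a'
    have hfil : (Finset.univ.filter fun j : Fin n => j.val < 0) = (∅ : Finset (Fin n)) := by
      ext j; simp
    have hbody : ∀ b : ∀ j, A j, (fun j : Fin n => if j.val < 0 then a' j else b j) = b := by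
      intro b; funext j; rw [if_neg (Nat.not_lt_zero _)]
    rw [hfil] at h
    rw [h]
    exact congrArg _ (funext fun b => congrArg (Q s) (hbody b))
end

section
/- Let {π^k} be a sequence of deterministic action-dependent policies generated by Algorithm AD-MPI, associated with an ADG G_d. Then the sequence of value functions is monotone nondecreasing, V^{π^{k+1}}(s) ≥ V^{π^k}(s) for all k and all s ∈ S; it is bounded above by the optimal value, V^{π^k}(s) ≤ V^*(s) for all k, s; and it converges in finitely many terms: there exist V° : S → ℝ and K ∈ ℕ such that V^{π^k} = V° for all k ≥ K. -/
/-- The one-step lookahead value `Q^V(s,a) = r(s,a) + γ Σ_{s'} P(s'|s,a) V(s')`. -/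
def QV {n : ℕ} {St : Type*} [Fintype St] {A : Fin n → Type*}
    (P : St → (∀ i, A i) → St → ℝ) (r : St → (∀ i, A i) → ℝ) (γ : ℝ)
    (V : St → ℝ) : St → (∀ i, A i) → ℝ :=
  fun s a => r s a + γ * ∑ s', P s a s' * V s'

/-- The joint action induced by a deterministic action-dependent policy `π`, with the
coordinates in `F` clamped to the values of `a'`: the agents outside `F` evaluate their
policies in increasing index order (well defined since `Ed j i → j < i`), each `π i`
conditioning on the actions of its in-neighbors `N_d(i) = {j | Ed j i}`. Taking
`F = ∅` yields the induced joint action `ā_π(s)`. -/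
def indAct {n : ℕ} {St : Type*} {A : Fin n → Type*}
    (Ed : Fin n → Fin n → Prop) [DecidableRel Ed]
    (hEd : ∀ i j : Fin n, Ed j i → j < i)
    (π : (i : Fin n) → St → ((j : {j : Fin n // Ed j i}) → A j.1) → A i)
    (F : Finset (Fin n)) (a' : ∀ i, A i) (s : St) : (i : Fin n) → A i
  | i =>
    if i ∈ F then a' i
    else π i s (fun j => indAct Ed hEd π F a' s j.1)
termination_by i => (i : ℕ)
decreasing_by exact hEd i j.1 j.2

/-- The full joint action built from clamped values `c` on `N_d(i)` and a value `ai`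
for agent `i` (coordinates outside `N_d[i]` are filled arbitrarily; they are irrelevant
when this vector is used to clamp only the coordinates in `N_d[i]`). -/
noncomputable def cvec {n : ℕ} {A : Fin n → Type*} [∀ i, Nonempty (A i)]
    (Ed : Fin n → Fin n → Prop) [DecidableRel Ed] (i : Fin n)
    (c : (j : {j : Fin n // Ed j i}) → A j.1) (ai : A i) : ∀ j, A j :=
  fun j =>
    if h : Ed j i then c ⟨j, h⟩
    else if h : j = i then cast (congrArg A h.symm) ai
    else Classical.arbitrary (A j)

/-- `(πseq, Vseq)` is an execution of Algorithm AD-MPI: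
* policy evaluation: `Vseq k` is the value function `V^{π^k}`, i.e. the fixed point of
  `T_{π^k} V (s) = Q^V(s, ā_{π^k}(s))`;
* policy iteration: for each agent `i` (in increasing order), `πseq (k+1) i (s, c)`
  maximizes `a_i ↦ Q^{V^{π^k}}(s, c, a_i, ā_{π^{k,i}_{-N_d[i]}}(s, c, a_i))`, where
  `π^{k,i}` uses the already-updated policies `π^{k+1}_j` for `j < i` and `π^k_j`
  otherwise, and the coordinates in `N_d[i]` are clamped to `(c, a_i)`. -/
noncomputable def ADMPI {n : ℕ} {St : Type*} [Fintype St] {A : Fin n → Type*}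
    [∀ i, Fintype (A i)] [∀ i, Nonempty (A i)]
    (P : St → (∀ i, A i) → St → ℝ) (r : St → (∀ i, A i) → ℝ) (γ : ℝ)
    (Ed : Fin n → Fin n → Prop) [DecidableRel Ed]
    (hEd : ∀ i j : Fin n, Ed j i → j < i)
    (πseq : ℕ → (i : Fin n) → St → ((j : {j : Fin n // Ed j i}) → A j.1) → A i)
    (Vseq : ℕ → St → ℝ) : Prop :=
  (∀ (k : ℕ) (s : St) (a' : ∀ i, A i),
      Vseq k s = QV P r γ (Vseq k) s (indAct Ed hEd (πseq k) ∅ a' s)) ∧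
  (∀ (k : ℕ) (i : Fin n) (s : St) (c : (j : {j : Fin n // Ed j i}) → A j.1)
      (ai : A i),
      QV P r γ (Vseq k) s
        (indAct Ed hEd (fun j => if j < i then πseq (k+1) j else πseq k j)
          (Finset.univ.filter fun j => Ed j i ∨ j = i) (cvec Ed i c ai) s)
      ≤ QV P r γ (Vseq k) s
        (indAct Ed hEd (fun j => if j < i then πseq (k+1) j else πseq k j)
          (Finset.univ.filter fun j => Ed j i ∨ j = i)
          (cvec Ed i c (πseq (k+1) i s c)) s))

/-! Policy evaluation is a `γ`-contraction, so a subsolution of `T_π` lies below every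
supersolution. Agent `i`'s greedy update is computed against exactly the joint action produced
by the intermediate policy `π^{k,i}`, so replacing the agents' policies one at a time in
topological order never decreases `Q^{V^{π^k}}` at the induced joint action. Hence `V^{π^k}` is
a subsolution of `T_{π^{k+1}}`, which gives monotonicity, and `V^*` is a supersolution of every
`T_π`, which gives the upper bound. Finally `V^π` is determined by the map `s ↦ ā_π(s)`, of which
there are finitely many, and a monotone sequence with finitely many values is eventually
constant. -/

theorem Monotone.exists_forall_ge_eq_of_factor {α β : Type*} [PartialOrder α] [Finite β]
    {V : ℕ → α} (hV : Monotone V) (b : ℕ → β) (hb : ∀ k l, b k = b l → V k = V l) :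
    ∃ K, ∀ k ≥ K, V k = V K := by
  obtain ⟨y, hy⟩ := Finite.exists_infinite_fiber b
  have hfiber : (b ⁻¹' {y}).Infinite := Set.infinite_coe_iff.mp hy
  obtain ⟨K, hK⟩ := hfiber.nonempty
  refine ⟨K, fun k hk => le_antisymm ?_ (hV hk)⟩
  obtain ⟨l, hl, hkl⟩ := hfiber.exists_gt k
  calc V k ≤ V l := hV hkl.le
    _ = V K := hb l K (hl.trans hK.symm)

abbrev ADPolicy {n : ℕ} (Ed : Fin n → Fin n → Prop) (St : Type*) (A : Fin n → Type*) :=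
  (i : Fin n) → St → ((j : {j : Fin n // Ed j i}) → A j.1) → A i

section

variable {n : ℕ} {St : Type*} {A : Fin n → Type*}

section Evaluation

variable [Fintype St] (P : St → (∀ i, A i) → St → ℝ) (r : St → (∀ i, A i) → ℝ) (γ : ℝ)

theorem QV_sub_QV_le (hP0 : ∀ s a s', 0 ≤ P s a s') (hP1 : ∀ s a, ∑ s', P s a s' = 1)
    (hγ0 : 0 ≤ γ) {W V : St → ℝ} {d : ℝ} (h : ∀ s, W s - V s ≤ d) (s : St) (a : ∀ i, A i) :
    QV P r γ W s a - QV P r γ V s a ≤ γ * d :=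
  calc QV P r γ W s a - QV P r γ V s a = γ * ∑ s', P s a s' * (W s' - V s') := by
        simp only [QV, mul_sub, Finset.sum_sub_distrib]; ring
    _ ≤ γ * ∑ s', P s a s' * d := by
        gcongr with s'
        · exact hP0 s a s'
        · exact h s'
    _ = γ * d := by rw [← Finset.sum_mul, hP1, one_mul]

theorem le_of_le_QV_of_QV_le (hP0 : ∀ s a s', 0 ≤ P s a s')
    (hP1 : ∀ s a, ∑ s', P s a s' = 1) (hγ0 : 0 ≤ γ) (hγ1 : γ < 1) (b : St → ∀ i, A i)
    {W V : St → ℝ} (hW : ∀ s, W s ≤ QV P r γ W s (b s)) (hV : ∀ s, QV P r γ V s (b s) ≤ V s)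
    (s : St) : W s ≤ V s := by
  have : Nonempty St := ⟨s⟩
  obtain ⟨s₀, hs₀⟩ := Finite.exists_max fun s => W s - V s
  have hcontr : W s₀ - V s₀ ≤ γ * (W s₀ - V s₀) :=
    calc W s₀ - V s₀ ≤ QV P r γ W s₀ (b s₀) - QV P r γ V s₀ (b s₀) := sub_le_sub (hW s₀) (hV s₀)
      _ ≤ γ * (W s₀ - V s₀) := QV_sub_QV_le P r γ hP0 hP1 hγ0 hs₀ s₀ (b s₀)
  have hmax : W s₀ - V s₀ ≤ 0 := by nlinarith
  linarith [hs₀ s]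

theorem eq_of_QV_fixed (hP0 : ∀ s a s', 0 ≤ P s a s') (hP1 : ∀ s a, ∑ s', P s a s' = 1)
    (hγ0 : 0 ≤ γ) (hγ1 : γ < 1) (b : St → ∀ i, A i) {W V : St → ℝ}
    (hW : ∀ s, W s = QV P r γ W s (b s)) (hV : ∀ s, V s = QV P r γ V s (b s)) : W = V :=
  funext fun s => le_antisymm
    (le_of_le_QV_of_QV_le P r γ hP0 hP1 hγ0 hγ1 b (fun s => (hW s).le) (fun s => (hV s).ge) s)
    (le_of_le_QV_of_QV_le P r γ hP0 hP1 hγ0 hγ1 b (fun s => (hV s).le) (fun s => (hW s).ge) s)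

end Evaluation

section JointAction

variable (Ed : Fin n → Fin n → Prop)

def mixPolicy (πo πn : ADPolicy Ed St A) (m : ℕ) : ADPolicy Ed St A :=
  fun j => if (j : ℕ) < m then πn j else πo j

theorem mixPolicy_succ_of_ne (πo πn : ADPolicy Ed St A) {m : ℕ} {j : Fin n}
    (hj : (j : ℕ) ≠ m) : mixPolicy Ed πo πn (m + 1) j = mixPolicy Ed πo πn m j := by
  simp only [mixPolicy, Nat.lt_succ_iff_lt_or_eq, hj, or_false]

variable [DecidableRel Ed] (hEd : ∀ i j : Fin n, Ed j i → j < i)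

theorem indAct_eq_ite (π : ADPolicy Ed St A) (F : Finset (Fin n)) (a' : ∀ i, A i) (s : St)
    (i : Fin n) :
    indAct Ed hEd π F a' s i =
      if i ∈ F then a' i else π i s (fun j => indAct Ed hEd π F a' s j.1) := by
  rw [indAct]

theorem indAct_empty_eq (π : ADPolicy Ed St A) (a' : ∀ i, A i) (s : St) (i : Fin n) :
    indAct Ed hEd π ∅ a' s i = π i s (fun j => indAct Ed hEd π ∅ a' s j.1) := by
  rw [indAct_eq_ite, if_neg (Finset.notMem_empty i)]

theorem eq_indAct_of_forall (π : ADPolicy Ed St A) (F : Finset (Fin n)) (a' : ∀ i, A i)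
    (s : St) (b : ∀ i, A i) (hF : ∀ i ∈ F, b i = a' i)
    (hnF : ∀ i ∉ F, b i = π i s (fun j => b j.1)) :
    b = indAct Ed hEd π F a' s := by
  funext i
  induction i using WellFoundedLT.induction with
  | _ i ih =>
    rw [indAct_eq_ite]
    split_ifs with hi
    · exact hF i hi
    · rw [hnF i hi]
      congr 1
      funext j
      exact ih j (hEd i j j.2)

theorem indAct_empty_eq_of_forall_lt (π π' : ADPolicy Ed St A) (m : ℕ)
    (h : ∀ j : Fin n, (j : ℕ) < m → π j = π' j) (a' : ∀ i, A i) (s : St) (i : Fin n)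
    (hi : (i : ℕ) < m) :
    indAct Ed hEd π ∅ a' s i = indAct Ed hEd π' ∅ a' s i := by
  induction i using WellFoundedLT.induction with
  | _ i ih =>
    rw [indAct_empty_eq, indAct_empty_eq, h i hi]
    congr 1
    funext j
    have hji := hEd i j j.2
    exact ih j hji ((Fin.lt_def.1 hji).trans hi)

variable [∀ i, Nonempty (A i)]

theorem eq_cvec_of_mem {i : Fin n} (hii : ¬ Ed i i) (b : ∀ j, A j) :
    ∀ j ∈ Finset.univ.filter (fun j => Ed j i ∨ j = i),
      b j = cvec Ed i (fun t => b t.1) (b i) j := by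
  intro j hj
  rcases (Finset.mem_filter.1 hj).2 with h | rfl
  · simp [cvec, h]
  · simp [cvec, hii]

variable [Fintype St] (P : St → (∀ i, A i) → St → ℝ) (r : St → (∀ i, A i) → ℝ) (γ : ℝ)

/-- `πn` is obtained from `πo` by the agent-by-agent greedy step of AD-MPI with respect to `V`. -/
def IsSequentialGreedy (V : St → ℝ) (πo πn : ADPolicy Ed St A) : Prop :=
  ∀ (i : Fin n) (s : St) (c : (j : {j : Fin n // Ed j i}) → A j.1) (ai : A i),
    QV P r γ V s
      (indAct Ed hEd (fun j => if j < i then πn j else πo j)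
        (Finset.univ.filter fun j => Ed j i ∨ j = i) (cvec Ed i c ai) s)
    ≤ QV P r γ V s
      (indAct Ed hEd (fun j => if j < i then πn j else πo j)
        (Finset.univ.filter fun j => Ed j i ∨ j = i) (cvec Ed i c (πn i s c)) s)

variable {Ed hEd P r γ}

theorem IsSequentialGreedy.QV_mixPolicy_le_succ {V : St → ℝ} {πo πn : ADPolicy Ed St A}
    (hG : IsSequentialGreedy Ed hEd P r γ V πo πn) (a' : ∀ i, A i) (s : St) {m : ℕ}
    (hm : m < n) :
    QV P r γ V s (indAct Ed hEd (mixPolicy Ed πo πn m) ∅ a' s)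
      ≤ QV P r γ V s (indAct Ed hEd (mixPolicy Ed πo πn (m + 1)) ∅ a' s) := by
  set i : Fin n := ⟨m, hm⟩
  set F := Finset.univ.filter fun j => Ed j i ∨ j = i
  set am := indAct Ed hEd (mixPolicy Ed πo πn m) ∅ a' s
  set am₁ := indAct Ed hEd (mixPolicy Ed πo πn (m + 1)) ∅ a' s
  have hii : ¬ Ed i i := fun h => (hEd i i h).false
  have hmix : (fun j => if j < i then πn j else πo j) = mixPolicy Ed πo πn m := by
    funext j
    simp [mixPolicy, Fin.lt_def, i]
  set c : (t : {t // Ed t i}) → A t.1 := fun t => am t.1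
  have hbelow : (fun t : {t // Ed t i} => am₁ t.1) = c := by
    funext t
    refine indAct_empty_eq_of_forall_lt Ed hEd _ _ m (fun j hj => ?_) a' s t.1 (hEd i t.1 t.2)
    simp [mixPolicy, hj, hj.trans (Nat.lt_succ_self m)]
  have hai : am₁ i = πn i s c := by
    rw [← hbelow]
    exact (indAct_empty_eq Ed hEd _ a' s i).trans
      (congrFun (congrFun (if_pos (Nat.lt_succ_self m)) s) _)
  -- Clamping `N_d[i]` to the values of the joint action of `mixPolicy m` (resp. `m + 1`)
  -- reproduces that joint action, since both agree with `mixPolicy m` outside `i`.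
  have hold : indAct Ed hEd (mixPolicy Ed πo πn m) F (cvec Ed i c (am i)) s = am :=
    (eq_indAct_of_forall Ed hEd _ F _ s am (eq_cvec_of_mem Ed hii am)
      fun j _ => indAct_empty_eq Ed hEd _ a' s j).symm
  have hnew : indAct Ed hEd (mixPolicy Ed πo πn m) F (cvec Ed i c (πn i s c)) s = am₁ := by
    rw [← hai, ← hbelow]
    refine (eq_indAct_of_forall Ed hEd _ F _ s am₁ (eq_cvec_of_mem Ed hii am₁)
      fun j hj => ?_).symm
    have hji : (j : ℕ) ≠ m := fun h =>
      hj (Finset.mem_filter.2 ⟨Finset.mem_univ j, Or.inr (Fin.ext h)⟩)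
    rw [← mixPolicy_succ_of_ne Ed πo πn hji]
    exact indAct_empty_eq Ed hEd _ a' s j
  calc QV P r γ V s am
      = QV P r γ V s (indAct Ed hEd (mixPolicy Ed πo πn m) F (cvec Ed i c (am i)) s) := by
        rw [hold]
    _ ≤ QV P r γ V s (indAct Ed hEd (mixPolicy Ed πo πn m) F (cvec Ed i c (πn i s c)) s) := by
        rw [← hmix]
        exact hG i s c (am i)
    _ = QV P r γ V s am₁ := by rw [hnew]

theorem IsSequentialGreedy.QV_indAct_le {V : St → ℝ} {πo πn : ADPolicy Ed St A}
    (hG : IsSequentialGreedy Ed hEd P r γ V πo πn) (a' : ∀ i, A i) (s : St) :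
    QV P r γ V s (indAct Ed hEd πo ∅ a' s) ≤ QV P r γ V s (indAct Ed hEd πn ∅ a' s) := by
  have hchain : ∀ m ≤ n, QV P r γ V s (indAct Ed hEd (mixPolicy Ed πo πn 0) ∅ a' s)
      ≤ QV P r γ V s (indAct Ed hEd (mixPolicy Ed πo πn m) ∅ a' s) := by
    intro m
    induction m with
    | zero => exact fun _ => le_rfl
    | succ m ih =>
      exact fun hm => (ih (Nat.le_of_succ_le hm)).trans (hG.QV_mixPolicy_le_succ a' s hm)
  have h₀ : mixPolicy Ed πo πn 0 = πo := by funext j; simp [mixPolicy]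
  have hn : mixPolicy Ed πo πn n = πn := by funext j; simp [mixPolicy, j.isLt]
  simpa only [h₀, hn] using hchain n le_rfl

end JointAction

end

/-- along any execution of Algorithm AD-MPI, the value-function sequence
`V^{π^k}` is monotone nondecreasing, bounded above by the optimal value `V^*` (the
fixed point of the Bellman optimality operator), and converges in finitely many
terms. -/
theorem stmt12 {n : ℕ} {St : Type*} [Fintype St] {A : Fin n → Type*}
    [∀ i, Fintype (A i)] [∀ i, Nonempty (A i)]
    (P : St → (∀ i, A i) → St → ℝ) (r : St → (∀ i, A i) → ℝ) (γ : ℝ)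
    (hP0 : ∀ s a s', 0 ≤ P s a s') (hP1 : ∀ s a, ∑ s', P s a s' = 1)
    (hγ0 : 0 ≤ γ) (hγ1 : γ < 1)
    (Ed : Fin n → Fin n → Prop) [DecidableRel Ed]
    (hEd : ∀ i j : Fin n, Ed j i → j < i)
    (πseq : ℕ → (i : Fin n) → St → ((j : {j : Fin n // Ed j i}) → A j.1) → A i)
    (Vseq : ℕ → St → ℝ)
    (hADMPI : ADMPI P r γ Ed hEd πseq Vseq)
    (Vstar : St → ℝ)
    (hVstar : ∀ s, Vstar s = ⨆ a : ∀ i, A i, QV P r γ Vstar s a) :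
    (∀ (k : ℕ) (s : St), Vseq k s ≤ Vseq (k+1) s) ∧
    (∀ (k : ℕ) (s : St), Vseq k s ≤ Vstar s) ∧
    (∃ (Vcirc : St → ℝ) (K : ℕ), ∀ k ≥ K, ∀ s, Vseq k s = Vcirc s) := by
  obtain ⟨hEval, hGreedy⟩ := hADMPI
  let a' : ∀ i, A i := fun _ => Classical.arbitrary _
  let b : ℕ → St → ∀ i, A i := fun k s => indAct Ed hEd (πseq k) ∅ a' s
  have hfix : ∀ k s, Vseq k s = QV P r γ (Vseq k) s (b k s) := fun k s => hEval k s a'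
  have hmono : ∀ k s, Vseq k s ≤ Vseq (k + 1) s := fun k =>
    le_of_le_QV_of_QV_le P r γ hP0 hP1 hγ0 hγ1 (b (k + 1))
      (fun s => (hfix k s).trans_le (IsSequentialGreedy.QV_indAct_le (hGreedy k) a' s))
      (fun s => (hfix (k + 1) s).ge)
  have hbound : ∀ k s, Vseq k s ≤ Vstar s := fun k =>
    le_of_le_QV_of_QV_le P r γ hP0 hP1 hγ0 hγ1 (b k) (fun s => (hfix k s).le)
      (fun s => (hVstar s).symm ▸ le_ciSup (Set.finite_range _).bddAbove (b k s))
  refine ⟨hmono, hbound, ?_⟩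
  obtain ⟨K, hK⟩ := Monotone.exists_forall_ge_eq_of_factor
    (monotone_nat_of_le_succ fun k s => hmono k s) b
    fun k l hkl => eq_of_QV_fixed P r γ hP0 hP1 hγ0 hγ1 (b k) (hfix k) (hkl ▸ hfix l)
  exact ⟨Vseq K, K, fun k hk s => congrFun (hK k hk) s⟩
end
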